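/- arXiv:1307.6595 — 5 statements merged into one kernel-verified Lean document; each statement's English description precedes it below -/
import Mathlib

section
/- In an ordered field, if a subring Z is an integer part (every element of the field lies within distance 1 above some element of Z, i.e., for every x there is z ∈ Z with z ≤ x < z + 1), then the fraction field of Z, viewed inside the field, is dense: between any two distinct elements of the field there is a quotient a/b with a, b in Z and b ≠ 0. -/
/-! Choose `b ∈ Z` with `b > 1 / (y - x)`, so that the interval `(b x, b y)` has length greater
than `1` and therefore contains `a = z + 1`, where `z ∈ Z` is an integer part of `b x`;
then `x < a / b < y`. -/

theorem Subring.exists_mem_lt_le_add_one {K : Type*} [Ring K] [PartialOrder K] [IsOrderedRing K]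
    {Z : Subring K} (hIP : ∀ x : K, ∃ z ∈ Z, z ≤ x ∧ x < z + 1) (x : K) :
    ∃ a ∈ Z, x < a ∧ a ≤ x + 1 := by
  obtain ⟨z, hz, hzx, hxz⟩ := hIP x
  exact ⟨z + 1, Z.add_mem hz Z.one_mem, hxz, add_le_add_left hzx 1⟩

theorem stmt_1 {K : Type*} [Field K] [LinearOrder K] [IsStrictOrderedRing K] (Z : Subring K)
    (hIP : ∀ x : K, ∃ z ∈ Z, z ≤ x ∧ x < z + 1) :
    ∀ x y : K, x < y → ∃ a ∈ Z, ∃ b ∈ Z, 0 < b ∧ x < a / b ∧ a / b < y := by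
  intro x y hxy
  have hyx : 0 < y - x := sub_pos.2 hxy
  obtain ⟨b, hbZ, hb, -⟩ := Z.exists_mem_lt_le_add_one hIP (y - x)⁻¹
  have hb0 : 0 < b := (inv_pos.2 hyx).trans hb
  have hgap : 1 < b * (y - x) := (inv_lt_iff_one_lt_mul₀ hyx).1 hb
  obtain ⟨a, haZ, hxa, hay⟩ := Z.exists_mem_lt_le_add_one hIP (b * x)
  refine ⟨a, haZ, b, hbZ, hb0, ?_, ?_⟩
  · rwa [lt_div_iff₀ hb0, mul_comm]
  · rw [div_lt_iff₀ hb0]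
    calc a ≤ b * x + 1 := hay
      _ < b * x + b * (y - x) := by gcongr
      _ = y * b := by ring
end

section
/- Let K be a linear ordered field with a dense subset Q, and let f : K → K be strictly monotone (increasing). Suppose that for every x ∈ K and every ε > 0 there exists δ > 0 such that for all q ∈ Q with |x − q| < δ we have |f(x) − f(q)| < ε. Then f is continuous on K (in the order topology). -/
/-! A monotone map is continuous at `x` once its values come arbitrarily close to `f x` from
both sides. Density gives points of `Q` just left and just right of `x`; the ε-δ condition
puts their values close to `f x`, and strict monotonicity puts them on the correct side. -/

open Set

section

variable {K : Type*} [Field K] [LinearOrder K] [IsStrictOrderedRing K]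
  {Q : Set K} {f : K → K} {x b : K}

theorem exists_mem_apply_mem_Ioo_left (hQ : ∀ x y : K, x < y → ∃ q ∈ Q, x < q ∧ q < y)
    (hf : StrictMono f)
    (hx : ∀ ε : K, 0 < ε → ∃ δ : K, 0 < δ ∧ ∀ q ∈ Q, |x - q| < δ → |f x - f q| < ε)
    (hb : b < f x) : ∃ q ∈ Q, f q ∈ Ioo b (f x) := by
  obtain ⟨δ, hδ, hclose⟩ := hx (f x - b) (sub_pos.2 hb)
  obtain ⟨q, hqQ, hδq, hqx⟩ := hQ (x - δ) x (sub_lt_self x hδ)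
  have hfq := hclose q hqQ (by rw [abs_sub_lt_iff]; constructor <;> linarith)
  exact ⟨q, hqQ, by linarith [le_abs_self (f x - f q)], hf hqx⟩

theorem exists_mem_apply_mem_Ioo_right (hQ : ∀ x y : K, x < y → ∃ q ∈ Q, x < q ∧ q < y)
    (hf : StrictMono f)
    (hx : ∀ ε : K, 0 < ε → ∃ δ : K, 0 < δ ∧ ∀ q ∈ Q, |x - q| < δ → |f x - f q| < ε)
    (hb : f x < b) : ∃ q ∈ Q, f q ∈ Ioo (f x) b := by
  obtain ⟨δ, hδ, hclose⟩ := hx (b - f x) (sub_pos.2 hb)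
  obtain ⟨q, hqQ, hxq, hqδ⟩ := hQ x (x + δ) (lt_add_of_pos_right x hδ)
  have hfq := hclose q hqQ (by rw [abs_sub_lt_iff]; constructor <;> linarith)
  exact ⟨q, hqQ, hf hxq, by linarith [neg_abs_le (f x - f q)]⟩

end

theorem stmt_2 {K : Type*} [Field K] [LinearOrder K] [IsStrictOrderedRing K] [TopologicalSpace K] [OrderTopology K]
    (Q : Set K) (hQ : ∀ x y : K, x < y → ∃ q ∈ Q, x < q ∧ q < y)
    (f : K → K) (hmono : StrictMono f)
    (hεδ : ∀ x : K, ∀ ε : K, 0 < ε → ∃ δ : K, 0 < δ ∧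
      ∀ q ∈ Q, |x - q| < δ → |f x - f q| < ε) :
    Continuous f := by
  refine continuous_iff_continuousAt.2 fun x ↦
    continuousAt_of_monotoneOn_of_exists_between (hmono.monotone.monotoneOn univ) Filter.univ_mem
      (fun b hb ↦ ?_) (fun b hb ↦ ?_)
  · obtain ⟨q, -, hq⟩ := exists_mem_apply_mem_Ioo_left hQ hmono (hεδ x) hb
    exact ⟨q, mem_univ q, hq⟩
  · obtain ⟨q, -, hq⟩ := exists_mem_apply_mem_Ioo_right hQ hmono (hεδ x) hb
    exact ⟨q, mem_univ q, hq⟩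
end

section
/- Let M be a discretely ordered commutative ring that is an integer part of an ordered field K, and suppose there is an element a ∈ M with a > n for all natural numbers n (a is infinite) such that the powers {a^i : i ∈ ℕ} are cofinal in K. Then there is no function g : K → K that is strictly monotone increasing and satisfies g(x) > x^n whenever x ≥ n^2 (for all n : ℕ). In particular K admits no GA-exponential. -/
theorem stmt_7_general {K : Type*} [Field K] [LinearOrder K] [IsStrictOrderedRing K]
    (a : K) (hinf : ∀ n : ℕ, (n : K) < a)
    (hcof : ∀ y : K, ∃ i : ℕ, y < a ^ i) :
    ¬∃ g : K → K, StrictMono g ∧ ∀ (x : K) (n : ℕ), (n : K) ^ 2 ≤ x → x ^ n < g x := by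
  rintro ⟨g, -, hg⟩
  obtain ⟨i, hgi⟩ := hcof (g a)
  have hi : (i : K) ^ 2 ≤ a := by exact_mod_cast (hinf (i ^ 2)).le
  exact (hg a i hi).not_gt hgi

theorem stmt_7 {K : Type*} [Field K] [LinearOrder K] [IsStrictOrderedRing K] (M : Subring K)
    (hdisc : ∀ z ∈ M, ∀ z' ∈ M, z < z' → z + 1 ≤ z')
    (hIP : ∀ x : K, ∃ z ∈ M, z ≤ x ∧ x < z + 1)
    (a : K) (haM : a ∈ M) (hinf : ∀ n : ℕ, (n : K) < a)
    (hcof : ∀ y : K, ∃ i : ℕ, y < a ^ i) :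
    ¬∃ g : K → K, StrictMono g ∧ ∀ (x : K) (n : ℕ), (n : K) ^ 2 ≤ x → x ^ n < g x :=
  stmt_7_general a hinf hcof
end

section
/- The map n ↦ 2^n on an ordered semiring is strictly monotone, and for rationals p/q < r/s (with q, s > 0), the rational approximation of 2^(p/q) is strictly less than that of 2^(r/s): concretely, in ℕ, if p*s < r*q then (appr(n, 2^p, q)) / n eventually stays below (appr(n, 2^r, s)) / n, where appr(n,a,b) is the largest m with m^b ≤ n^b * a. -/
/-!
Write `A = appr n (2 ^ p) q` and `B = appr n (2 ^ r) s`, so `A ^ q ≤ n ^ q 2 ^ p` and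
`n ^ s 2 ^ r < (B + 1) ^ s`. If `B ≤ A`, raising to the power `k = q s` gives
`(B + 1) ^ k > n ^ k 2 ^ (r q) ≥ 2 n ^ k 2 ^ (p s) ≥ 2 A ^ k ≥ 2 B ^ k`, using `p s < r q`.
Since `B ≥ n`, for large `n` Bernoulli's inequality applied to `(1 - 1 / (B + 1)) ^ k` gives
`(B + 1) ^ k ≤ 2 B ^ k`, a contradiction.
-/

/-- `appr n a b` is the largest `m` with `m ^ b ≤ n ^ b * a`. -/
def appr (n a b : ℕ) : ℕ := Nat.findGreatest (fun m => m ^ b ≤ n ^ b * a) (n ^ b * a)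

theorem add_one_pow_le_two_mul_pow {K : Type*} [Field K] [LinearOrder K] [IsStrictOrderedRing K]
    {x : K} (hx : 0 ≤ x) {k : ℕ} (hk : 2 * (k : K) ≤ x + 1) : (x + 1) ^ k ≤ 2 * x ^ k := by
  have hx1 : 0 < x + 1 := by linarith
  have bernoulli : 1 + k * (-1 / (x + 1)) ≤ (1 + -1 / (x + 1)) ^ k :=
    one_add_mul_le_pow (by rw [neg_div, neg_le_neg_iff, div_le_iff₀ hx1]; linarith) k
  have half_le : 1 / 2 ≤ 1 + k * (-1 / (x + 1)) := by
    have : (k : K) / (x + 1) ≤ 1 / 2 := by rw [div_le_iff₀ hx1]; linarith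
    have e : (k : K) * (-1 / (x + 1)) = -(k / (x + 1)) := by ring
    linarith
  have ratio : 1 + -1 / (x + 1) = x / (x + 1) := by field_simp; ring
  rw [ratio, div_pow] at bernoulli
  have half_le_ratio := half_le.trans bernoulli
  rw [le_div_iff₀ (pow_pos hx1 k)] at half_le_ratio
  linarith

theorem Nat.add_one_pow_le_two_mul_pow {B k : ℕ} (hk : 2 * k ≤ B + 1) :
    (B + 1) ^ k ≤ 2 * B ^ k := by
  exact_mod_cast
    _root_.add_one_pow_le_two_mul_pow (K := ℚ) (Nat.cast_nonneg B) (by exact_mod_cast hk)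

section appr

variable {n a b : ℕ}

theorem appr_pow_le (hb : 0 < b) : appr n a b ^ b ≤ n ^ b * a :=
  Nat.findGreatest_spec (P := fun m => m ^ b ≤ n ^ b * a) (Nat.zero_le _)
    (by simp [Nat.zero_pow hb])

theorem lt_appr_add_one_pow (hb : 0 < b) : n ^ b * a < (appr n a b + 1) ^ b := by
  by_cases h : appr n a b + 1 ≤ n ^ b * a
  · by_contra! hle
    exact Nat.findGreatest_is_greatest (P := fun m => m ^ b ≤ n ^ b * a)
      (lt_add_one (appr n a b)) h hle
  · calc n ^ b * a < appr n a b + 1 := by omega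
      _ ≤ (appr n a b + 1) ^ b := Nat.le_self_pow hb.ne' _

theorem le_appr (ha : 1 ≤ a) (hb : 0 < b) : n ≤ appr n a b :=
  Nat.le_findGreatest (Nat.le_self_pow hb.ne' n |>.trans (Nat.le_mul_of_pos_right _ ha))
    (Nat.le_mul_of_pos_right _ ha)

end appr

theorem appr_lt_appr {n a c q s : ℕ} (hq : 0 < q) (hs : 0 < s) (hc : 1 ≤ c)
    (hac : 2 * a ^ s ≤ c ^ q) (hn : 2 * (q * s) ≤ n + 1) :
    appr n a q < appr n c s := by
  set A := appr n a q
  set B := appr n c s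
  by_contra! hBA
  have hnB : n ≤ B := le_appr hc hs
  have upper : (B + 1) ^ (q * s) ≤ 2 * B ^ (q * s) :=
    Nat.add_one_pow_le_two_mul_pow (by omega)
  have lower : 2 * B ^ (q * s) < (B + 1) ^ (q * s) :=
    calc 2 * B ^ (q * s) ≤ 2 * (A ^ q) ^ s := by
          rw [← pow_mul]; gcongr
      _ ≤ 2 * (n ^ q * a) ^ s := by gcongr; exact appr_pow_le hq
      _ = n ^ (q * s) * (2 * a ^ s) := by rw [mul_pow, ← pow_mul]; ring
      _ ≤ n ^ (q * s) * c ^ q := by gcongr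
      _ = (n ^ s * c) ^ q := by rw [mul_pow, ← pow_mul, mul_comm s q]
      _ < ((B + 1) ^ s) ^ q := Nat.pow_lt_pow_left (lt_appr_add_one_pow hs) hq.ne'
      _ = (B + 1) ^ (q * s) := by rw [← pow_mul, mul_comm s q]
  omega

theorem stmt_10 :
    StrictMono (fun n : ℕ => (2 : ℕ) ^ n) ∧
      ∀ p r q s : ℕ, 0 < q → 0 < s → p * s < r * q →
        ∃ N : ℕ, ∀ n : ℕ, N ≤ n →
          (appr n (2 ^ p) q : ℚ) / (n : ℚ) < (appr n (2 ^ r) s : ℚ) / (n : ℚ) := by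
  refine ⟨pow_right_strictMono₀ one_lt_two, fun p r q s hq hs hpr => ?_⟩
  refine ⟨2 * (q * s), fun n hn => ?_⟩
  have hpow : 2 * (2 ^ p) ^ s ≤ (2 ^ r) ^ q := by
    rw [← pow_mul, ← pow_mul, ← pow_succ']
    exact Nat.pow_le_pow_right two_pos (by omega)
  have hn0 : (0 : ℚ) < n := by
    have : 0 < q * s := Nat.mul_pos hq hs
    exact_mod_cast (show 0 < n by omega)
  exact div_lt_div_of_pos_right
    (by exact_mod_cast appr_lt_appr hq hs Nat.one_le_two_pow hpow (by omega)) hn0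
end

section
/- If M is a model of true arithmetic (or merely a discretely ordered semiring with the floor property and full induction for definable sets) then the quotient field construction K_M via definable Cauchy sequences has M as an integer part: every class of a definable convergent sequence r admits s in M with s ≤ r < s + 1. -/
/-! The set of `z ∈ Z` with `r < z + 1` is nonempty and bounded below as soon as `|r|` is
bounded by an element of `Z`, and its least element is the floor of `r`. Such a bound comes
from any approximation `a / b` of `r` within `1`: discreteness gives `b ≥ 1`, so
`|a / b| ≤ |a|`. -/

section IntegerPart

variable {K : Type*}

theorem one_le_of_mem_of_pos [Ring K] [LinearOrder K] (Z : Subring K)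
    (hdisc : ¬∃ z ∈ Z, 0 < z ∧ z < 1) {z : K} (hz : z ∈ Z) (hpos : 0 < z) : 1 ≤ z :=
  not_lt.mp fun hlt => hdisc ⟨z, hz, hpos, hlt⟩

theorem Subring.abs_mem [Ring K] [LinearOrder K] (Z : Subring K) {a : K} (ha : a ∈ Z) :
    |a| ∈ Z := by
  rcases abs_choice a with h | h <;> rw [h]
  · exact ha
  · exact Z.neg_mem ha

theorem exists_mem_abs_lt_of_abs_sub_div_lt_one [Field K] [LinearOrder K] [IsStrictOrderedRing K]
    (Z : Subring K) (hdisc : ¬∃ z ∈ Z, 0 < z ∧ z < 1) {r a b : K} (ha : a ∈ Z)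
    (hb : b ∈ Z) (hbpos : 0 < b) (hr : |r - a / b| < 1) : ∃ n ∈ Z, |r| < n := by
  have hdiv : |a / b| ≤ |a| := by
    rw [abs_div, abs_of_pos hbpos]
    exact div_le_self (abs_nonneg a) (one_le_of_mem_of_pos Z hdisc hb hbpos)
  refine ⟨|a| + 1, Z.add_mem (Z.abs_mem ha) Z.one_mem, ?_⟩
  linarith [abs_sub_abs_le_abs_sub r (a / b)]

theorem exists_floor_of_abs_lt [CommRing K] [LinearOrder K] [IsStrictOrderedRing K] (Z : Subring K)
    (hwo : ∀ S : Set K, S ⊆ (Z : Set K) → S.Nonempty →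
      (∃ l ∈ Z, ∀ z ∈ S, l ≤ z) → ∃ s ∈ S, ∀ z ∈ S, s ≤ z)
    {r n : K} (hn : n ∈ Z) (hrn : |r| < n) : ∃ s ∈ Z, s ≤ r ∧ r < s + 1 := by
  obtain ⟨hnr, hrn⟩ := abs_lt.mp hrn
  have hbdd : ∃ l ∈ Z, ∀ z ∈ {z | z ∈ Z ∧ r < z + 1}, l ≤ z :=
    ⟨-n - 1, Z.sub_mem (Z.neg_mem hn) Z.one_mem, fun z hz => by linarith [hz.2]⟩
  obtain ⟨s, ⟨hs, hrs⟩, hmin⟩ :=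
    hwo {z | z ∈ Z ∧ r < z + 1} (fun z hz => hz.1) ⟨n, hn, by linarith⟩ hbdd
  refine ⟨s, hs, not_lt.mp fun hsr => ?_, hrs⟩
  have := hmin (s - 1) ⟨Z.sub_mem hs Z.one_mem, by linarith⟩
  linarith

end IntegerPart

theorem stmt_18_general {K : Type*} [Field K] [LinearOrder K] [IsStrictOrderedRing K] (Z : Subring K)
    (hdisc : ¬∃ z ∈ Z, 0 < z ∧ z < 1)
    (hwo : ∀ S : Set K, S ⊆ (Z : Set K) → S.Nonempty →
      (∃ l ∈ Z, ∀ z ∈ S, l ≤ z) → ∃ s ∈ S, ∀ z ∈ S, s ≤ z)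
    (r : K) (c : ℕ → K)
    (hfrac : ∀ k : ℕ, ∃ a ∈ Z, ∃ b ∈ Z, 0 < b ∧ c k = a / b)
    (hconv : ∀ m ∈ Z, 0 < m → ∃ N : ℕ, ∀ k : ℕ, N ≤ k → |r - c k| < 1 / m) :
    ∃ s ∈ Z, s ≤ r ∧ r < s + 1 := by
  obtain ⟨N, hN⟩ := hconv 1 Z.one_mem one_pos
  obtain ⟨a, ha, b, hb, hbpos, hab⟩ := hfrac N
  have happrox : |r - a / b| < 1 := by simpa [hab] using hN N le_rfl
  obtain ⟨n, hn, hrn⟩ := exists_mem_abs_lt_of_abs_sub_div_lt_one Z hdisc ha hb hbpos happrox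
  exact exists_floor_of_abs_lt Z hwo hn hrn

theorem stmt_18 {K : Type*} [Field K] [LinearOrder K] [IsStrictOrderedRing K] (Z : Subring K)
    (hdisc : ¬∃ z ∈ Z, 0 < z ∧ z < 1)
    (hwo : ∀ S : Set K, S ⊆ (Z : Set K) → S.Nonempty →
      (∃ l ∈ Z, ∀ z ∈ S, l ≤ z) → ∃ s ∈ S, ∀ z ∈ S, s ≤ z)
    (hfloor : ∀ a ∈ Z, ∀ b ∈ Z, 0 < b → ∃ k ∈ Z, k * b ≤ a ∧ a < (k + 1) * b)
    (r : K) (c : ℕ → K)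
    (hfrac : ∀ k : ℕ, ∃ a ∈ Z, ∃ b ∈ Z, 0 < b ∧ c k = a / b)
    (hconv : ∀ m ∈ Z, 0 < m → ∃ N : ℕ, ∀ k : ℕ, N ≤ k → |r - c k| < 1 / m) :
    ∃ s ∈ Z, s ≤ r ∧ r < s + 1 :=
  stmt_18_general Z hdisc hwo r c hfrac hconv
end
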